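/- Existence of a typicality threshold balancing atypicality and false-acceptance probabilities (Steps 2–4 of the proof of Theorem 1). Let P and Q be probability distributions on 𝒳, L ≥ 1 an integer, N ≥ 1, ρ ∈ (0,1), s ∈ (0,1−ρ). Set B = Σ_{Y∈𝒴} (Σ_{X∈𝒳} P(X) W(Y|X)^{s/(s+ρ)})^{s+ρ} (Σ_{X∈𝒳} Q(X) W(Y|X))^{1−s}. Then there exists a function τ : 𝒴^N → ℝ such that both of the following hold. (a) If X ∈ 𝒳^N has i.i.d. components with distribution P and, given X, Y has distribution W^N(·|X), then Pr{ W^N(Y|X) ≤ e^{−N τ(Y)} } ≤ L^ρ · B^N. (b) If X̃, X_1,…,X_L are mutually independent random vectors in 𝒳^N with the components of X̃ i.i.d. with distribution Q and the components of each X_w i.i.d. with distribution P, and given all of them Y has distribution W^N(·|X̃), then Pr{ ∃ w ∈ {1,…,L} : W^N(Y|X_w) > e^{−N τ(Y)} } ≤ L^ρ · B^N. -/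

import Mathlib

open scoped BigOperators Classical

noncomputable section

/-- `W` is a discrete memoryless channel from `𝓧` to `𝓨`. -/
def IsDMC {𝓧 𝓨 : Type*} [Fintype 𝓨] (W : 𝓧 → 𝓨 → ℝ) : Prop :=
  (∀ x y, 0 ≤ W x y) ∧ ∀ x, ∑ y, W x y = 1

/-- `P` is a probability distribution on `𝓧`. -/
def IsDist {𝓧 : Type*} [Fintype 𝓧] (P : 𝓧 → ℝ) : Prop :=
  (∀ x, 0 ≤ P x) ∧ ∑ x, P x = 1

/-- The `N`-fold memoryless extension `W^N(y|x)`. -/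
def Wn {𝓧 𝓨 : Type*} (W : 𝓧 → 𝓨 → ℝ) {N : ℕ} (x : Fin N → 𝓧) (y : Fin N → 𝓨) : ℝ :=
  ∏ j, W (x j) (y j)

/-!
Fix an output `y` and write `v = s / (s + ρ)`, `a = ∑ₓ Pᴺ(x) Wᴺ(y|x)^v` and `b = ∑ₓ Qᴺ(x) Wᴺ(y|x)`;
the threshold `T = exp (-N τ(y))` is chosen for each `y` separately. Since `w ≤ T` implies
`w ≤ w^v T^(1-v)`, the atypicality contribution of `y` is at most `T^(1-v) a`; by Markov's
inequality and the union bound over the `L` codewords, the false-acceptance contribution is at most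
`b · min 1 (L a T^(-v))`. If `b^s ≤ L^ρ a^(s+ρ)`, the trivial bound `min ≤ 1` already gives
`b ≤ L^ρ a^(s+ρ) b^(1-s)`, and a threshold below every positive likelihood makes the first term
vanish. Otherwise a threshold balancing the two bounds exists because `s + ρ < 1`. Summing over `y`,
`a` and `b` factorize over the `N` coordinates, which produces `L^ρ B^N`.
-/

open Finset Real

section Threshold

variable {ι : Type*} [Fintype ι] {μ w : ι → ℝ}

lemma exists_pos_forall_le_imp_eq_zero (hw : ∀ i, 0 ≤ w i) :
    ∃ T > 0, ∀ i, w i ≤ T → w i = 0 := by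
  by_cases hpos : ∃ i, 0 < w i
  · obtain ⟨i₀, hi₀, hmin⟩ := (univ.filter fun i => 0 < w i).exists_min_image w
      (by simpa [Finset.Nonempty] using hpos)
    have hw₀ : 0 < w i₀ := (mem_filter.mp hi₀).2
    refine ⟨w i₀ / 2, by positivity, fun i hi => ?_⟩
    by_contra hne
    have := hmin i (mem_filter.mpr ⟨mem_univ i, (hw i).lt_of_ne' hne⟩)
    linarith
  · simp only [not_exists, not_lt] at hpos
    exact ⟨1, one_pos, fun i _ => le_antisymm (hpos i) (hw i)⟩

lemma sum_mul_ite_le_le_rpow_mul (hμ : ∀ i, 0 ≤ μ i) (hw : ∀ i, 0 ≤ w i) {T v : ℝ}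
    (hT : 0 < T) (hv : v ≤ 1) :
    ∑ i, μ i * w i * (if w i ≤ T then 1 else 0) ≤ T ^ (1 - v) * ∑ i, μ i * w i ^ v := by
  rw [mul_sum]
  refine sum_le_sum fun i _ => ?_
  split_ifs with hle
  · calc μ i * w i * 1 = μ i * (w i ^ v * w i ^ (1 - v)) := by
          rw [← rpow_add' (hw i) (by norm_num), add_sub_cancel, rpow_one, mul_one]
      _ ≤ μ i * (w i ^ v * T ^ (1 - v)) :=
          mul_le_mul_of_nonneg_left (mul_le_mul_of_nonneg_left
            (rpow_le_rpow (hw i) hle (by linarith)) (rpow_nonneg (hw i) v)) (hμ i)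
      _ = T ^ (1 - v) * (μ i * w i ^ v) := by ring
  · rw [mul_zero]
    exact mul_nonneg (rpow_nonneg hT.le _) (mul_nonneg (hμ i) (rpow_nonneg (hw i) _))

lemma rpow_mul_sum_ite_lt_le (hμ : ∀ i, 0 ≤ μ i) (hw : ∀ i, 0 ≤ w i) {T v : ℝ}
    (hT : 0 < T) (hv : 0 ≤ v) :
    T ^ v * ∑ i, μ i * (if T < w i then 1 else 0) ≤ ∑ i, μ i * w i ^ v := by
  rw [mul_sum]
  refine sum_le_sum fun i _ => ?_
  split_ifs with hlt
  · have := hμ i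
    rw [mul_one, mul_comm]
    gcongr
  · rw [mul_zero, mul_zero]
    exact mul_nonneg (hμ i) (rpow_nonneg (hw i) _)

lemma exists_rpow_mul_le_and_mul_le {a b L ρ s : ℝ} (ha : 0 ≤ a) (hb : 0 < b) (hL : 0 < L)
    (hρ : 0 < ρ) (hs : 0 < s) (hsρ : s + ρ < 1) (hab : L ^ ρ * a ^ (s + ρ) ≤ b ^ s) :
    ∃ T > 0, T ^ (1 - s / (s + ρ)) * a ≤ L ^ ρ * a ^ (s + ρ) * b ^ (1 - s) ∧
      L * a * b ≤ L ^ ρ * a ^ (s + ρ) * b ^ (1 - s) * T ^ (s / (s + ρ)) := by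
  rcases ha.eq_or_lt with rfl | ha
  · have : (0 : ℝ) ^ (s + ρ) = 0 := zero_rpow (by linarith)
    exact ⟨1, one_pos, by simp [this], by simp [this]⟩
  obtain ⟨α, rfl⟩ : ∃ α, a = exp α := ⟨log a, (exp_log ha).symm⟩
  obtain ⟨β, rfl⟩ : ∃ β, b = exp β := ⟨log b, (exp_log hb).symm⟩
  obtain ⟨l, rfl⟩ : ∃ l, L = exp l := ⟨log L, (exp_log hL).symm⟩
  -- `θ` is chosen so that the first inequality is an equality.
  set θ := ρ * l + (s + ρ - 1) * α + (1 - s) * β with hθ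
  refine ⟨exp ((s + ρ) / ρ * θ), exp_pos _, ?_, ?_⟩ <;>
    simp only [← exp_mul, ← exp_add, exp_le_exp] at hab ⊢
  · have : (s + ρ) / ρ * θ * (1 - s / (s + ρ)) = θ := by field_simp; ring
    linarith
  · have key : ρ * (l * ρ + α * (s + ρ) + β * (1 - s) + (s + ρ) / ρ * θ * (s / (s + ρ))
        - (l + α + β)) = (1 - s - ρ) * (β * s - l * ρ - α * (s + ρ)) := by
      rw [hθ]; field_simp; ring
    have h : 0 ≤ (1 - s - ρ) * (β * s - l * ρ - α * (s + ρ)) :=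
      mul_nonneg (by linarith) (by linarith)
    rw [← key] at h
    linarith [(mul_nonneg_iff_of_pos_left hρ).mp h]

theorem exists_threshold (hμ : ∀ i, 0 ≤ μ i) (hw : ∀ i, 0 ≤ w i) {b L ρ s : ℝ} (hb : 0 ≤ b)
    (hL : 0 < L) (hρ : 0 < ρ) (hs : 0 < s) (hsρ : s + ρ < 1) :
    ∃ T > 0,
      ∑ i, μ i * w i * (if w i ≤ T then 1 else 0)
          ≤ L ^ ρ * (∑ i, μ i * w i ^ (s / (s + ρ))) ^ (s + ρ) * b ^ (1 - s) ∧
        b * min 1 (L * ∑ i, μ i * (if T < w i then 1 else 0))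
          ≤ L ^ ρ * (∑ i, μ i * w i ^ (s / (s + ρ))) ^ (s + ρ) * b ^ (1 - s) := by
  set a := ∑ i, μ i * w i ^ (s / (s + ρ))
  have ha : 0 ≤ a := sum_nonneg fun i _ => mul_nonneg (hμ i) (rpow_nonneg (hw i) _)
  have hLa : 0 ≤ L ^ ρ * a ^ (s + ρ) := mul_nonneg (rpow_nonneg hL.le _) (rpow_nonneg ha _)
  rcases le_or_gt (b ^ s) (L ^ ρ * a ^ (s + ρ)) with hba | hab
  · obtain ⟨T, hT, hT0⟩ := exists_pos_forall_le_imp_eq_zero hw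
    refine ⟨T, hT, ?_, ?_⟩
    · rw [sum_eq_zero fun i _ => by split_ifs with h <;> [simp [hT0 i h]; simp]]
      exact mul_nonneg hLa (rpow_nonneg hb _)
    · calc b * min 1 _ ≤ b * 1 := mul_le_mul_of_nonneg_left (min_le_left _ _) hb
        _ = b ^ s * b ^ (1 - s) := by
          rw [← rpow_add' hb (by norm_num), add_sub_cancel, rpow_one, mul_one]
        _ ≤ _ := mul_le_mul_of_nonneg_right hba (rpow_nonneg hb _)
  · have hb : 0 < b := hb.lt_of_ne <| by
      rintro rfl
      rw [zero_rpow hs.ne'] at hab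
      exact hab.not_ge hLa
    have hv : 0 < s / (s + ρ) := by positivity
    obtain ⟨T, hT, hTa, hTb⟩ :=
      exists_rpow_mul_le_and_mul_le ha hb hL hρ hs hsρ hab.le
    refine ⟨T, hT, (sum_mul_ite_le_le_rpow_mul hμ hw hT ?_).trans hTa, ?_⟩
    · rw [div_le_one (by positivity)]; linarith
    have hMarkov := rpow_mul_sum_ite_lt_le hμ hw hT hv.le
    set p := ∑ i, μ i * (if T < w i then 1 else 0)
    refine (mul_le_mul_of_nonneg_left (min_le_right _ _) hb.le).trans <|
      le_of_mul_le_mul_right ?_ (rpow_pos_of_pos hT (s / (s + ρ)))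
    calc b * (L * p) * T ^ (s / (s + ρ)) = b * L * (T ^ (s / (s + ρ)) * p) := by ring
      _ ≤ b * L * a := by gcongr
      _ = L * a * b := by ring
      _ ≤ _ := hTb

end Threshold

lemma ite_exists_le_sum {ι : Type*} [Fintype ι] (p : ι → Prop) :
    (if ∃ i, p i then (1 : ℝ) else 0) ≤ ∑ i, if p i then 1 else 0 := by
  split_ifs with h
  · obtain ⟨i, hi⟩ := h
    calc (1 : ℝ) = if p i then 1 else 0 := (if_pos hi).symm
      _ ≤ ∑ i, if p i then 1 else 0 :=
        single_le_sum (f := fun j => if p j then (1 : ℝ) else 0)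
          (fun j _ => by split_ifs <;> norm_num) (mem_univ i)
  · exact sum_nonneg fun j _ => by split_ifs <;> norm_num

section Product

variable {α ι : Type*} [Fintype α] [Fintype ι] [DecidableEq ι] {μ : α → ℝ}

lemma IsDist.pi (hμ : IsDist μ) : IsDist fun x : ι → α => ∏ i, μ (x i) :=
  ⟨fun x => prod_nonneg fun i _ => hμ.1 _, by
    rw [← Fintype.prod_sum (fun _ a => μ a)]
    simp [hμ.2]⟩

lemma sum_prod_mul_apply (hμ : ∑ a, μ a = 1) (f : α → ℝ) (i₀ : ι) :
    ∑ x : ι → α, (∏ i, μ (x i)) * f (x i₀) = ∑ a, μ a * f a := by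
  have hsplit (x : ι → α) : (∏ i, μ (x i)) * f (x i₀)
      = ∏ i, μ (x i) * (if i = i₀ then f (x i) else 1) := by
    rw [prod_mul_distrib, prod_ite_eq' univ i₀]
    simp
  have hfactor (i : ι) : ∑ a, μ a * (if i = i₀ then f a else 1)
      = if i = i₀ then ∑ a, μ a * f a else 1 := by
    split_ifs <;> simp [hμ]
  simp_rw [hsplit, ← Fintype.prod_sum (fun i a => μ a * (if i = i₀ then f a else 1)), hfactor,
    prod_ite_eq' univ i₀, if_pos (mem_univ _)]

lemma sum_prod_mul_ite_exists_le (hμ : IsDist μ) (E : α → Prop) :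
    ∑ x : ι → α, (∏ i, μ (x i)) * (if ∃ i, E (x i) then 1 else 0)
      ≤ min 1 (Fintype.card ι * ∑ a, μ a * if E a then 1 else 0) := by
  have hx (x : ι → α) : 0 ≤ ∏ i, μ (x i) := prod_nonneg fun i _ => hμ.1 _
  refine le_min ?_ ?_
  · refine (sum_le_sum fun x _ => mul_le_of_le_one_right (hx x) ?_).trans_eq hμ.pi.2
    split_ifs <;> norm_num
  calc _ ≤ ∑ x : ι → α, (∏ i, μ (x i)) * ∑ i, if E (x i) then 1 else 0 :=
        sum_le_sum fun x _ => mul_le_mul_of_nonneg_left (ite_exists_le_sum _) (hx x)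
    _ = ∑ i, ∑ x : ι → α, (∏ i, μ (x i)) * (if E (x i) then 1 else 0) := by
        simp_rw [mul_sum]
        exact sum_comm
    _ = _ := by
        simp only [sum_prod_mul_apply hμ.2 fun a => if E a then 1 else 0, sum_const, card_univ,
          nsmul_eq_mul]

end Product

lemma sum_prod_rpow_mul_prod_rpow {β : Type*} [Fintype β] {a b : β → ℝ} (ha : ∀ y, 0 ≤ a y)
    (hb : ∀ y, 0 ≤ b y) (p q : ℝ) (N : ℕ) :
    ∑ y : Fin N → β, (∏ j, a (y j)) ^ p * (∏ j, b (y j)) ^ q = (∑ y, a y ^ p * b y ^ q) ^ N := by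
  rw [Fintype.sum_pow]
  refine sum_congr rfl fun y _ => ?_
  rw [prod_mul_distrib, finsetProd_rpow _ _ (fun j _ => ha _),
    finsetProd_rpow _ _ (fun j _ => hb _)]

section Channel

variable {𝓧 𝓨 : Type*} {N : ℕ}

lemma Wn_nonneg {W : 𝓧 → 𝓨 → ℝ} (hW : ∀ x y, 0 ≤ W x y) (x : Fin N → 𝓧) (y : Fin N → 𝓨) :
    0 ≤ Wn W x y :=
  prod_nonneg fun _ _ => hW _ _

variable [Fintype 𝓧]

lemma sum_prod_mul_Wn (μ : 𝓧 → ℝ) (W : 𝓧 → 𝓨 → ℝ) (y : Fin N → 𝓨) :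
    ∑ x : Fin N → 𝓧, (∏ j, μ (x j)) * Wn W x y = ∏ j, ∑ a, μ a * W a (y j) := by
  simp_rw [Wn, ← prod_mul_distrib]
  exact (Fintype.prod_sum fun j a => μ a * W a (y j)).symm

lemma sum_prod_mul_Wn_rpow {W : 𝓧 → 𝓨 → ℝ} (hW : ∀ x y, 0 ≤ W x y) (μ : 𝓧 → ℝ)
    (y : Fin N → 𝓨) (v : ℝ) :
    ∑ x : Fin N → 𝓧, (∏ j, μ (x j)) * Wn W x y ^ v = ∏ j, ∑ a, μ a * W a (y j) ^ v := by
  simp_rw [Wn, ← finsetProd_rpow _ _ (fun j _ => hW _ _)]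
  exact sum_prod_mul_Wn μ (fun a b => W a b ^ v) y

lemma sum_false_acceptance_le [Fintype 𝓨] {W : 𝓧 → 𝓨 → ℝ} {μ ν : (Fin N → 𝓧) → ℝ} {L : ℕ}
    (hμ : IsDist μ) (hν : ∀ x, 0 ≤ ν x) (hW : ∀ x y, 0 ≤ W x y) (T : (Fin N → 𝓨) → ℝ) :
    ∑ xt, ∑ xs : Fin L → Fin N → 𝓧, ∑ y : Fin N → 𝓨,
        ν xt * (∏ w, μ (xs w)) * Wn W xt y * (if ∃ w, T y < Wn W (xs w) y then 1 else 0)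
      ≤ ∑ y, (∑ xt, ν xt * Wn W xt y) *
          min 1 (L * ∑ x, μ x * if T y < Wn W x y then 1 else 0) := by
  calc _ = ∑ xt, ∑ y, ∑ xs : Fin L → Fin N → 𝓧, ν xt * Wn W xt y *
          ((∏ w, μ (xs w)) * (if ∃ w, T y < Wn W (xs w) y then 1 else 0)) :=
        sum_congr rfl fun xt _ => by
          rw [sum_comm]
          exact sum_congr rfl fun _ _ => sum_congr rfl fun _ _ => by ring
    _ = ∑ y, (∑ xt, ν xt * Wn W xt y) * ∑ xs : Fin L → Fin N → 𝓧,
          (∏ w, μ (xs w)) * (if ∃ w, T y < Wn W (xs w) y then 1 else 0) := by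
        rw [sum_comm]
        simp_rw [sum_mul_sum]
    _ ≤ _ := sum_le_sum fun y _ => mul_le_mul_of_nonneg_left
        (by simpa using sum_prod_mul_ite_exists_le (ι := Fin L) hμ fun x => T y < Wn W x y)
        (sum_nonneg fun xt _ => mul_nonneg (hν xt) (Wn_nonneg hW xt y))

end Channel

theorem stmt7_general {𝓧 𝓨 : Type*} [Fintype 𝓧] [Fintype 𝓨]
    (W : 𝓧 → 𝓨 → ℝ) (hW : IsDMC W)
    (P Q : 𝓧 → ℝ) (hP : IsDist P) (hQ : IsDist Q)
    (L N : ℕ) (hL : 1 ≤ L) (hN : 1 ≤ N)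
    (ρ s : ℝ) (hρ : ρ ∈ Set.Ioo (0:ℝ) 1) (hs : s ∈ Set.Ioo (0:ℝ) (1 - ρ)) :
    ∃ τ : (Fin N → 𝓨) → ℝ,
      -- (a) atypicality probability bound
      (∑ x : Fin N → 𝓧, ∑ y : Fin N → 𝓨,
          (∏ j, P (x j)) * Wn W x y *
            (if Wn W x y ≤ Real.exp (-((N : ℝ) * τ y)) then (1:ℝ) else 0))
        ≤ (L : ℝ) ^ ρ *
            (∑ y : 𝓨, (∑ x : 𝓧, P x * W x y ^ (s / (s + ρ))) ^ (s + ρ) *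
                (∑ x : 𝓧, Q x * W x y) ^ (1 - s)) ^ N ∧
      -- (b) false-acceptance probability bound
      (∑ xt : Fin N → 𝓧, ∑ xw : Fin L → Fin N → 𝓧, ∑ y : Fin N → 𝓨,
          (∏ j, Q (xt j)) * (∏ w, ∏ j, P (xw w j)) * Wn W xt y *
            (if ∃ w, Real.exp (-((N : ℝ) * τ y)) < Wn W (xw w) y then (1:ℝ) else 0))
        ≤ (L : ℝ) ^ ρ *
            (∑ y : 𝓨, (∑ x : 𝓧, P x * W x y ^ (s / (s + ρ))) ^ (s + ρ) *
                (∑ x : 𝓧, Q x * W x y) ^ (1 - s)) ^ N := by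
  have hPN : IsDist fun x : Fin N → 𝓧 => ∏ j, P (x j) := hP.pi
  have hQN : IsDist fun x : Fin N → 𝓧 => ∏ j, Q (x j) := hQ.pi
  choose T hT hTa hTb using fun y : Fin N → 𝓨 =>
    exists_threshold hPN.1 (fun x => Wn_nonneg hW.1 x y)
      (sum_nonneg fun x _ => mul_nonneg (hQN.1 x) (Wn_nonneg hW.1 x y))
      (by exact_mod_cast hL : (0 : ℝ) < L) hρ.1 hs.1 (by linarith [hs.2])
  obtain ⟨τ, hτ⟩ : ∃ τ : (Fin N → 𝓨) → ℝ, ∀ y, Real.exp (-((N : ℝ) * τ y)) = T y :=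
    ⟨fun y => -Real.log (T y) / N, fun y => by
      rw [mul_div_cancel₀ _ (by positivity), neg_neg, exp_log (hT y)]⟩
  have hsum : ∑ y : Fin N → 𝓨, (L : ℝ) ^ ρ *
        (∑ x : Fin N → 𝓧, (∏ j, P (x j)) * Wn W x y ^ (s / (s + ρ))) ^ (s + ρ) *
        (∑ x : Fin N → 𝓧, (∏ j, Q (x j)) * Wn W x y) ^ (1 - s)
      = (L : ℝ) ^ ρ * (∑ y : 𝓨, (∑ x : 𝓧, P x * W x y ^ (s / (s + ρ))) ^ (s + ρ) *
          (∑ x : 𝓧, Q x * W x y) ^ (1 - s)) ^ N := by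
    simp_rw [sum_prod_mul_Wn_rpow hW.1, sum_prod_mul_Wn, mul_assoc, ← mul_sum]
    rw [sum_prod_rpow_mul_prod_rpow
      (fun y => sum_nonneg fun x _ => mul_nonneg (hP.1 x) (rpow_nonneg (hW.1 x y) _))
      (fun y => sum_nonneg fun x _ => mul_nonneg (hQ.1 x) (hW.1 x y))]
  refine ⟨τ, ?_, ?_⟩ <;> simp only [hτ]
  · rw [sum_comm]
    exact (sum_le_sum fun y _ => hTa y).trans_eq hsum
  · exact ((sum_false_acceptance_le hPN hQN.1 hW.1 T).trans
      (sum_le_sum fun y _ => hTb y)).trans_eq hsum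

/-- Existence of a typicality threshold balancing the atypicality and
false-acceptance probabilities (Steps 2–4 of the proof of Theorem 1). -/
theorem stmt7 {𝓧 𝓨 : Type*} [Fintype 𝓧] [Fintype 𝓨] [Nonempty 𝓧] [Nonempty 𝓨]
    (W : 𝓧 → 𝓨 → ℝ) (hW : IsDMC W)
    (P Q : 𝓧 → ℝ) (hP : IsDist P) (hQ : IsDist Q)
    (L N : ℕ) (hL : 1 ≤ L) (hN : 1 ≤ N)
    (ρ s : ℝ) (hρ : ρ ∈ Set.Ioo (0:ℝ) 1) (hs : s ∈ Set.Ioo (0:ℝ) (1 - ρ)) :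
    ∃ τ : (Fin N → 𝓨) → ℝ,
      -- (a) atypicality probability bound
      (∑ x : Fin N → 𝓧, ∑ y : Fin N → 𝓨,
          (∏ j, P (x j)) * Wn W x y *
            (if Wn W x y ≤ Real.exp (-((N : ℝ) * τ y)) then (1:ℝ) else 0))
        ≤ (L : ℝ) ^ ρ *
            (∑ y : 𝓨, (∑ x : 𝓧, P x * W x y ^ (s / (s + ρ))) ^ (s + ρ) *
                (∑ x : 𝓧, Q x * W x y) ^ (1 - s)) ^ N ∧
      -- (b) false-acceptance probability bound
      (∑ xt : Fin N → 𝓧, ∑ xw : Fin L → Fin N → 𝓧, ∑ y : Fin N → 𝓨,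
          (∏ j, Q (xt j)) * (∏ w, ∏ j, P (xw w j)) * Wn W xt y *
            (if ∃ w, Real.exp (-((N : ℝ) * τ y)) < Wn W (xw w) y then (1:ℝ) else 0))
        ≤ (L : ℝ) ^ ρ *
            (∑ y : 𝓨, (∑ x : 𝓧, P x * W x y ^ (s / (s + ρ))) ^ (s + ρ) *
                (∑ x : 𝓧, Q x * W x y) ^ (1 - s)) ^ N :=
  stmt7_general W hW P Q hP hQ L N hL hN ρ s hρ hs
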